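/- arXiv:1507.06275 — 3 statements merged into one kernel-verified Lean document; each statement's English description precedes it below -/
import Mathlib

section
/- For the radius ρ(I) = √(a² + (1-b)²) of a random interval I = [a,b] with independent Uniform[0,1] endpoints, if 1/2 < y ≤ 1 then P(ρ(I)² ≤ y) = y(π/2 − 2·arccos(1/√(2y))) + √(2y−1). -/
open MeasureTheory Set Real

/-!
A point of the unit square is nearer to the corner `(0, 1)` than to `(1, 0)` exactly when it lies
above the diagonal, so the set is the union of the parts of the square within `√y` of these two
corners. For `y ≤ 1` each part is a quarter disc of area `π y / 4`. For `y > 1/2` the two circles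
meet inside the square at the abscissae `(1 ± √(2y - 1)) / 2`, and the overlap is the lens between
them, of area `2 y arccos (1 / √(2y)) - √(2y - 1)`; inclusion–exclusion gives the result.
-/

theorem prod_region_between_cc_eq_regionBetween {α : Type*} [MeasurableSpace α] {μ : Measure α}
    [SFinite μ] {f g : α → ℝ} {s : Set α} (hf : Measurable f) (hg : Measurable g)
    (hs : MeasurableSet s) :
    μ.prod volume {p : α × ℝ | p.1 ∈ s ∧ p.2 ∈ Icc (f p.1) (g p.1)} =
      μ.prod volume (regionBetween f g s) := by
  rw [Measure.prod_apply (measurableSet_region_between_cc hf hg hs),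
    Measure.prod_apply (measurableSet_regionBetween hf hg hs)]
  refine lintegral_congr fun x => ?_
  by_cases hx : x ∈ s <;>
    simp only [regionBetween, preimage_ofPred_eq, hx, true_and, false_and, ofPred_mem_eq,
      ofPred_false]
  simp

theorem volume_region_between_cc_Icc_eq_integral {f g : ℝ → ℝ} {a b : ℝ} (hab : a ≤ b)
    (hf : Continuous f) (hg : Continuous g) (hfg : ∀ x ∈ Icc a b, f x ≤ g x) :
    volume {p : ℝ × ℝ | p.1 ∈ Icc a b ∧ p.2 ∈ Icc (f p.1) (g p.1)} =
      ENNReal.ofReal (∫ x in a..b, (g x - f x)) := by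
  rw [Measure.volume_eq_prod, prod_region_between_cc_eq_regionBetween hf.measurable
    hg.measurable measurableSet_Icc, volume_regionBetween_eq_integral hf.integrableOn_Icc
    hg.integrableOn_Icc measurableSet_Icc hfg, intervalIntegral.integral_of_le hab,
    integral_Icc_eq_integral_Ioc]
  rfl

theorem hasDerivAt_mul_sqrt_sub_sq_add_arcsin {y x : ℝ} (hx : x ^ 2 < y) :
    HasDerivAt (fun t => (t * √(y - t ^ 2) + y * arcsin (t / √y)) / 2) (√(y - x ^ 2)) x := by
  have hy : 0 < y := (sq_nonneg x).trans_lt hx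
  have hsy : 0 < √y := sqrt_pos.2 hy
  obtain ⟨hx₁, hx₂⟩ := sq_lt.1 hx
  have hsqrt : HasDerivAt (fun t => √(y - t ^ 2)) (-(2 * x) / (2 * √(y - x ^ 2))) x := by
    refine HasDerivAt.sqrt ?_ (by linarith)
    simpa using (hasDerivAt_pow 2 x).const_sub y
  have harcsin : HasDerivAt (fun t => arcsin (t / √y)) (1 / √(1 - (x / √y) ^ 2) * (1 / √y)) x :=
    HasDerivAt.comp (h₂ := arcsin) x
      (hasDerivAt_arcsin ((lt_div_iff₀ hsy).2 (by linarith)).ne' ((div_lt_one hsy).2 hx₂).ne)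
      ((hasDerivAt_id' x).div_const √y)
  refine (((hasDerivAt_id' x).mul hsqrt).add (harcsin.const_mul y)).div_const 2
    |>.congr_deriv ?_
  have hdisc : 1 - (x / √y) ^ 2 = (y - x ^ 2) / y := by
    rw [div_pow, sq_sqrt hy.le]; field_simp
  have hpos : 0 < √(y - x ^ 2) := sqrt_pos.2 (by linarith)
  rw [hdisc, sqrt_div (by linarith) y]
  field_simp
  linear_combination -(sq_sqrt (by linarith : (0:ℝ) ≤ y - x ^ 2))

theorem integral_sqrt_sub_sq_of_sq_add_sq {y a b : ℝ} (ha : 0 ≤ a) (hab : a ≤ b)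
    (h : a ^ 2 + b ^ 2 = y) :
    ∫ x in a..b, √(y - x ^ 2) = y / 2 * (arcsin (b / √y) - arcsin (a / √y)) := by
  rcases hab.eq_or_lt with rfl | hab
  · simp
  -- since `√(y - a²) = b` and `√(y - b²) = a`, the algebraic part of the primitive cancels
  rw [intervalIntegral.integral_eq_sub_of_hasDerivAt_of_le hab.le (by fun_prop)
    (fun x hx => hasDerivAt_mul_sqrt_sub_sq_add_arcsin (by nlinarith [hx.1, hx.2]))
    ((by fun_prop : Continuous fun x => √(y - x ^ 2)).intervalIntegrable _ _)]
  rw [← h, add_sub_cancel_right, add_sub_cancel_left, sqrt_sq ha, sqrt_sq (ha.trans hab.le)]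
  ring

theorem arcsin_sub_arcsin_eq_two_mul_arccos {y : ℝ} (hy₀ : 1 / 2 ≤ y) (hy₁ : y ≤ 1) :
    arcsin ((1 + √(2 * y - 1)) / 2 / √y) - arcsin ((1 - √(2 * y - 1)) / 2 / √y) =
      2 * arccos (1 / √(2 * y)) := by
  set θ := arccos (1 / √(2 * y))
  have hsqrt : √(2 * y) = √2 * √y := sqrt_mul zero_le_two y
  have h2y : 1 ≤ √(2 * y) := one_le_sqrt.2 (by linarith)
  have hcos : cos θ = 1 / √(2 * y) :=
    cos_arccos (by linarith [one_div_pos.2 (zero_lt_one.trans_le h2y)])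
      (div_le_one_of_le₀ h2y (by linarith))
  have hsin : sin θ = √(2 * y - 1) / √(2 * y) := by
    rw [sin_arccos, div_pow, one_pow, sq_sqrt (by linarith), one_sub_div (by linarith),
      sqrt_div' _ (by linarith)]
  have hθ₀ : 0 ≤ θ := arccos_nonneg _
  have hθ₁ : θ ≤ π / 4 := by
    rw [arccos_le_pi_div_four, div_le_div_iff₀ two_pos (by linarith), one_mul, hsqrt]
    nlinarith [mul_self_sqrt (zero_le_two : (0 : ℝ) ≤ 2), Real.sqrt_le_one.2 hy₁, sqrt_nonneg 2]
  have hpi := pi_pos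
  have hplus : sin (π / 4 + θ) = (1 + √(2 * y - 1)) / 2 / √y := by
    rw [sin_add, sin_pi_div_four, cos_pi_div_four, hcos, hsin, hsqrt]
    field_simp
  have hminus : sin (π / 4 - θ) = (1 - √(2 * y - 1)) / 2 / √y := by
    rw [sin_sub, sin_pi_div_four, cos_pi_div_four, hcos, hsin, hsqrt]
    field_simp
  rw [← hplus, ← hminus, arcsin_sin (by linarith) (by linarith),
    arcsin_sin (by linarith) (by linarith)]
  ring

theorem one_sub_sqrt_le_sqrt_iff {x y : ℝ} (hy : y ≤ 1) (hx : x ^ 2 ≤ y)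
    (hx' : (1 - x) ^ 2 ≤ y) :
    1 - √(y - x ^ 2) ≤ √(y - (1 - x) ^ 2) ↔ (2 * x - 1) ^ 2 ≤ 2 * y - 1 := by
  set u := √(y - x ^ 2)
  set v := √(y - (1 - x) ^ 2)
  have hu : u ^ 2 = y - x ^ 2 := sq_sqrt (by linarith)
  have hv : v ^ 2 = y - (1 - x) ^ 2 := sq_sqrt (by linarith)
  have hu₀ : 0 ≤ u := sqrt_nonneg _
  have hv₀ : 0 ≤ v := sqrt_nonneg _
  -- squared, `1 ≤ u + v` reads `1 - u² - v² ≤ 2uv`, and the squares of its two sides differ by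
  have key :
      (2 * u * v) ^ 2 - (1 - u ^ 2 - v ^ 2) ^ 2 = 2 * (2 * y - 1 - (2 * x - 1) ^ 2) := by
    rw [mul_pow, mul_pow, hu, hv]; ring
  rw [sub_le_iff_le_add]
  constructor
  · intro h
    have hsum : 1 - u ^ 2 - v ^ 2 ≤ 2 * u * v := by nlinarith
    rcases le_or_gt (1 - u ^ 2 - v ^ 2) 0 with hR | hR
    · nlinarith
    · nlinarith [pow_le_pow_left₀ hR.le hsum 2]
  · intro h
    have hsum : 1 - u ^ 2 - v ^ 2 ≤ 2 * u * v :=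
      (le_abs_self _).trans (abs_le_of_sq_le_sq (by linarith) (by positivity))
    nlinarith

def quarterDisk (y : ℝ) : Set (ℝ × ℝ) :=
  {q | q ∈ Icc (0 : ℝ) 1 ×ˢ Icc (0 : ℝ) 1 ∧ q.1 ^ 2 + (1 - q.2) ^ 2 ≤ y}

theorem measurableSet_quarterDisk (y : ℝ) : MeasurableSet (quarterDisk y) :=
  (measurableSet_Icc.prod measurableSet_Icc).inter
    (measurableSet_le (by fun_prop) measurable_const :
      MeasurableSet {q : ℝ × ℝ | q.1 ^ 2 + (1 - q.2) ^ 2 ≤ y})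

theorem setOf_min_max_eq_quarterDisk_union_swap (y : ℝ) :
    {q : ℝ × ℝ | q ∈ Icc (0 : ℝ) 1 ×ˢ Icc (0 : ℝ) 1 ∧
      (min q.1 q.2) ^ 2 + (1 - max q.1 q.2) ^ 2 ≤ y} =
      quarterDisk y ∪ Prod.swap ⁻¹' quarterDisk y := by
  ext ⟨a, b⟩
  simp only [quarterDisk, mem_union, mem_preimage, Prod.swap_prod_mk, mem_ofPred_eq, mem_prod]
  -- `b² + (1 - a)² - (a² + (1 - b)²) = 2 (b - a)`: only the corner on the side of `(a, b)` counts
  rcases le_total a b with hab | hab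
  · rw [min_eq_left hab, max_eq_right hab]
    constructor
    · tauto
    · rintro (h | h) <;> refine ⟨by tauto, ?_⟩ <;> nlinarith
  · rw [min_eq_right hab, max_eq_left hab]
    constructor
    · tauto
    · rintro (h | h) <;> refine ⟨by tauto, ?_⟩ <;> nlinarith

theorem quarterDisk_eq {y : ℝ} (hy₀ : 0 ≤ y) (hy₁ : y ≤ 1) :
    quarterDisk y = {p | p.1 ∈ Icc 0 √y ∧ p.2 ∈ Icc (1 - √(y - p.1 ^ 2)) 1} := by
  ext ⟨x, z⟩
  simp only [quarterDisk, mem_ofPred_eq, mem_prod, mem_Icc]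
  constructor
  · rintro ⟨⟨⟨hx₀, -⟩, hz₀, hz₁⟩, h⟩
    have hx : x ^ 2 ≤ y := by nlinarith
    exact ⟨⟨hx₀, le_sqrt_of_sq_le hx⟩,
      sub_le_comm.1 ((le_sqrt (by linarith) (by linarith)).2 (by linarith)), hz₁⟩
  · rintro ⟨⟨hx₀, hxy⟩, hz, hz₁⟩
    have hx : x ^ 2 ≤ y := (Real.sq_le hy₀).2 ⟨by linarith [sqrt_nonneg y], hxy⟩
    have hu₁ : √(y - x ^ 2) ≤ 1 := Real.sqrt_le_one.2 (by linarith [sq_nonneg x])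
    refine ⟨⟨⟨hx₀, hxy.trans (Real.sqrt_le_one.2 hy₁)⟩, by linarith, hz₁⟩, ?_⟩
    nlinarith [(le_sqrt (by linarith) (by linarith)).1 (sub_le_comm.1 hz)]

theorem volume_quarterDisk {y : ℝ} (hy₀ : 0 ≤ y) (hy₁ : y ≤ 1) :
    volume (quarterDisk y) = ENNReal.ofReal (π * y / 4) := by
  rw [quarterDisk_eq hy₀ hy₁, volume_region_between_cc_Icc_eq_integral
    (f := fun x => 1 - √(y - x ^ 2)) (g := fun _ => 1) (sqrt_nonneg y) (by fun_prop)
    continuous_const (fun x _ => sub_le_self 1 (sqrt_nonneg _))]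
  simp_rw [sub_sub_cancel]
  rw [integral_sqrt_sub_sq_of_sq_add_sq le_rfl (sqrt_nonneg y) (by rw [sq_sqrt hy₀]; ring)]
  rcases hy₀.eq_or_lt with rfl | hy
  · simp
  · rw [div_self (sqrt_pos.2 hy).ne', zero_div, arcsin_one, arcsin_zero]
    ring_nf

section lens

variable {x y : ℝ}

theorem sq_le_of_sq_two_mul_sub_one_le (h : (2 * x - 1) ^ 2 ≤ 2 * y - 1) : x ^ 2 ≤ y := by
  nlinarith [sq_nonneg (y - 1), sq_nonneg (2 * x - 1 - y)]

theorem sq_two_mul_sub_one_le_iff (hy : 1 / 2 ≤ y) :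
    (2 * x - 1) ^ 2 ≤ 2 * y - 1 ↔ x ∈ Icc ((1 - √(2 * y - 1)) / 2) ((1 + √(2 * y - 1)) / 2) := by
  rw [Real.sq_le (by linarith), mem_Icc]
  constructor <;> rintro ⟨h₁, h₂⟩ <;> constructor <;> linarith

theorem one_sub_sqrt_le_sqrt_of_mem_Icc (hy₀ : 1 / 2 ≤ y) (hy₁ : y ≤ 1)
    (hx : x ∈ Icc ((1 - √(2 * y - 1)) / 2) ((1 + √(2 * y - 1)) / 2)) :
    1 - √(y - x ^ 2) ≤ √(y - (1 - x) ^ 2) := by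
  have h := (sq_two_mul_sub_one_le_iff hy₀).2 hx
  have h' : (2 * (1 - x) - 1) ^ 2 ≤ 2 * y - 1 := by
    linarith [show (2 * (1 - x) - 1) ^ 2 = (2 * x - 1) ^ 2 by ring]
  exact (one_sub_sqrt_le_sqrt_iff hy₁ (sq_le_of_sq_two_mul_sub_one_le h)
    (sq_le_of_sq_two_mul_sub_one_le h')).2 h

theorem quarterDisk_inter_swap_eq (hy₀ : 1 / 2 ≤ y) (hy₁ : y ≤ 1) :
    quarterDisk y ∩ Prod.swap ⁻¹' quarterDisk y =
      {p | p.1 ∈ Icc ((1 - √(2 * y - 1)) / 2) ((1 + √(2 * y - 1)) / 2) ∧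
        p.2 ∈ Icc (1 - √(y - p.1 ^ 2)) √(y - (1 - p.1) ^ 2)} := by
  ext ⟨x, z⟩
  simp only [quarterDisk, mem_inter_iff, mem_preimage, Prod.swap_prod_mk, mem_ofPred_eq, mem_prod]
  constructor
  · rintro ⟨⟨⟨⟨hx₀, hx₁⟩, hz₀, hz₁⟩, hA⟩, -, hB⟩
    have hx : x ^ 2 ≤ y := by nlinarith
    have hx' : (1 - x) ^ 2 ≤ y := by nlinarith
    have hzu : 1 - z ≤ √(y - x ^ 2) := (le_sqrt (by linarith) (by linarith)).2 (by linarith)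
    have hzv : z ≤ √(y - (1 - x) ^ 2) := (le_sqrt hz₀ (by linarith)).2 (by linarith)
    exact ⟨(sq_two_mul_sub_one_le_iff hy₀).1
      ((one_sub_sqrt_le_sqrt_iff hy₁ hx hx').1 (by linarith)), by linarith, hzv⟩
  · rintro ⟨hx, hzu, hzv⟩
    have h := (sq_two_mul_sub_one_le_iff hy₀).2 hx
    have hx : x ^ 2 ≤ y := sq_le_of_sq_two_mul_sub_one_le h
    have hx' : (1 - x) ^ 2 ≤ y := sq_le_of_sq_two_mul_sub_one_le <| by
      linarith [show (2 * (1 - x) - 1) ^ 2 = (2 * x - 1) ^ 2 by ring]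
    have hu₁ : √(y - x ^ 2) ≤ 1 := Real.sqrt_le_one.2 (by linarith [sq_nonneg x])
    have hv₁ : √(y - (1 - x) ^ 2) ≤ 1 := Real.sqrt_le_one.2 (by linarith [sq_nonneg (1 - x)])
    have hx₀ : 0 ≤ x := by nlinarith
    have hx₁ : x ≤ 1 := by nlinarith
    have hz₀ : 0 ≤ z := by linarith
    have hz₁ : z ≤ 1 := by linarith
    refine ⟨⟨⟨⟨hx₀, hx₁⟩, hz₀, hz₁⟩, ?_⟩, ⟨⟨hz₀, hz₁⟩, hx₀, hx₁⟩, ?_⟩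
    · nlinarith [(le_sqrt (by linarith) (by linarith)).1 (sub_le_comm.1 hzu)]
    · nlinarith [(le_sqrt hz₀ (by linarith)).1 hzv]

theorem integral_lens_eq (hy₀ : 1 / 2 ≤ y) (hy₁ : y ≤ 1) :
    ∫ x in (1 - √(2 * y - 1)) / 2..(1 + √(2 * y - 1)) / 2,
        (√(y - (1 - x) ^ 2) - (1 - √(y - x ^ 2))) =
      2 * y * arccos (1 / √(2 * y)) - √(2 * y - 1) := by
  have hc : √(2 * y - 1) ^ 2 = 2 * y - 1 := sq_sqrt (by linarith)
  have hc₁ : √(2 * y - 1) ≤ 1 := Real.sqrt_le_one.2 (by linarith)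
  have hsym : ∫ x in (1 - √(2 * y - 1)) / 2..(1 + √(2 * y - 1)) / 2, √(y - (1 - x) ^ 2) =
      ∫ x in (1 - √(2 * y - 1)) / 2..(1 + √(2 * y - 1)) / 2, √(y - x ^ 2) := by
    rw [intervalIntegral.integral_comp_sub_left (fun x => √(y - x ^ 2)) 1]
    congr 1 <;> ring
  have hu : Continuous fun x : ℝ => √(y - x ^ 2) := by fun_prop
  have hv : Continuous fun x : ℝ => √(y - (1 - x) ^ 2) := by fun_prop
  rw [intervalIntegral.integral_sub (hv.intervalIntegrable _ _)
      ((by fun_prop : Continuous fun x : ℝ => 1 - √(y - x ^ 2)).intervalIntegrable _ _),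
    intervalIntegral.integral_sub intervalIntegrable_const (hu.intervalIntegrable _ _),
    intervalIntegral.integral_const, smul_eq_mul, mul_one, hsym,
    integral_sqrt_sub_sq_of_sq_add_sq (by linarith) (by linarith [sqrt_nonneg (2 * y - 1)])
      (by linear_combination hc / 2),
    arcsin_sub_arcsin_eq_two_mul_arccos hy₀ hy₁]
  ring

theorem two_mul_arccos_sub_sqrt_nonneg (hy₀ : 1 / 2 ≤ y) (hy₁ : y ≤ 1) :
    0 ≤ 2 * y * arccos (1 / √(2 * y)) - √(2 * y - 1) := by
  rw [← integral_lens_eq hy₀ hy₁]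
  exact intervalIntegral.integral_nonneg (by linarith [sqrt_nonneg (2 * y - 1)])
    fun x hx => sub_nonneg.2 (one_sub_sqrt_le_sqrt_of_mem_Icc hy₀ hy₁ hx)

theorem volume_quarterDisk_inter_swap (hy₀ : 1 / 2 ≤ y) (hy₁ : y ≤ 1) :
    volume (quarterDisk y ∩ Prod.swap ⁻¹' quarterDisk y) =
      ENNReal.ofReal (2 * y * arccos (1 / √(2 * y)) - √(2 * y - 1)) := by
  rw [quarterDisk_inter_swap_eq hy₀ hy₁, volume_region_between_cc_Icc_eq_integral
    (f := fun x => 1 - √(y - x ^ 2)) (g := fun x => √(y - (1 - x) ^ 2))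
    (by linarith [sqrt_nonneg (2 * y - 1)]) (by fun_prop) (by fun_prop)
    (fun x hx => one_sub_sqrt_le_sqrt_of_mem_Icc hy₀ hy₁ hx), integral_lens_eq hy₀ hy₁]

end lens

/-- For the radius `ρ(I) = √(a² + (1-b)²)` of a random interval with
independent Uniform[0,1] endpoints (`a = min`, `b = max`), if `1/2 < y ≤ 1`
then `P(ρ(I)² ≤ y) = y(π/2 − 2·arccos(1/√(2y))) + √(2y−1)`. -/
theorem radius_sq_cdf_large (y : ℝ) (hy0 : 1/2 < y) (hy : y ≤ 1) :
    volume {q : ℝ × ℝ | q ∈ Set.Icc (0:ℝ) 1 ×ˢ Set.Icc (0:ℝ) 1 ∧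
      (min q.1 q.2)^2 + (1 - max q.1 q.2)^2 ≤ y} =
    ENNReal.ofReal (y * (π / 2 - 2 * Real.arccos (1 / Real.sqrt (2*y))) +
      Real.sqrt (2*y - 1)) := by
  have hswap : volume (Prod.swap ⁻¹' quarterDisk y) = volume (quarterDisk y) :=
    Measure.measurePreserving_swap.measure_preimage
      (measurableSet_quarterDisk y).nullMeasurableSet
  have key := measure_union_add_inter (μ := volume) (quarterDisk y)
    ((measurableSet_quarterDisk y).preimage measurable_swap)
  rw [hswap, volume_quarterDisk (by linarith) hy, volume_quarterDisk_inter_swap hy0.le hy] at key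
  rw [setOf_min_max_eq_quarterDisk_union_swap,
    ENNReal.eq_sub_of_add_eq ENNReal.ofReal_ne_top key,
    ← ENNReal.ofReal_add (by positivity) (by positivity),
    ← ENNReal.ofReal_sub _ (two_mul_arccos_sub_sqrt_nonneg hy0.le hy)]
  congr 1
  ring
end

section
/- The area of the intersection of the two disks of radius √y (for 1/2 ≤ y ≤ 1) centered at (0,1) and (1,0) equals y·arccos(1/y − 1) − √(2y − 1). -/
/-!
Put `y = a² + b²` with `a + b = 1` and `0 ≤ a ≤ b`; then `a`, `b` are the abscissae of the two
points where the circles meet, and the lens is the region over `[a, b]` between the lower arc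
`z = 1 - √(y - x²)` of the first circle and the upper arc `z = √(y - (x - 1)²)` of the second.
The reflection `x ↦ 1 - x` maps `[a, b]` onto itself and one arc onto the other, so the area is
`2 ∫ₐᵇ √(y - x²) dx - (b - a)`. The primitive `(x √(y - x²) + y arcsin (x / √y)) / 2` turns this
into `y (arcsin (b / √y) - arcsin (a / √y)) - (b - a)`, and the cosine of that angle difference
is `2ab / y = 1 / y - 1`.
-/

open MeasureTheory Real Set

section RegionBetween

variable {α : Type*} [MeasurableSpace α] {μ : Measure α} {f g : α → ℝ} {s : Set α}

theorem volume_region_between_cc_eq_lintegral (hf : Measurable f) (hg : Measurable g)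
    (hs : MeasurableSet s) :
    μ.prod volume {p : α × ℝ | p.1 ∈ s ∧ p.2 ∈ Icc (f p.1) (g p.1)} =
      ∫⁻ x in s, ENNReal.ofReal (g x - f x) ∂μ := by
  rw [Measure.prod_apply (measurableSet_region_between_cc hf hg hs), ← lintegral_indicator hs]
  refine lintegral_congr fun x => ?_
  by_cases hx : x ∈ s
  · simp only [hx, indicator_of_mem, preimage_ofPred_eq, true_and, ofPred_mem_eq, Real.volume_Icc]
  · simp [hx]

theorem volume_region_between_cc_eq_integral (hf : Measurable f) (hg : Measurable g)
    (hs : MeasurableSet s) (hint : IntegrableOn (fun x => g x - f x) s μ)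
    (hfg : ∀ x ∈ s, f x ≤ g x) :
    μ.prod volume {p : α × ℝ | p.1 ∈ s ∧ p.2 ∈ Icc (f p.1) (g p.1)} =
      ENNReal.ofReal (∫ x in s, (g x - f x) ∂μ) := by
  rw [volume_region_between_cc_eq_lintegral hf hg hs, ofReal_integral_eq_lintegral_ofReal hint]
  exact (ae_restrict_iff' hs).mpr (.of_forall fun x hx => sub_nonneg.mpr (hfg x hx))

end RegionBetween

theorem sq_add_sq_le_iff {x z c : ℝ} : x ^ 2 + z ^ 2 ≤ c ↔ x ^ 2 ≤ c ∧ |z| ≤ √(c - x ^ 2) := by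
  constructor
  · intro h
    exact ⟨by nlinarith [sq_nonneg z], abs_le_sqrt (by linarith)⟩
  · rintro ⟨hx, hz⟩
    have h := (Real.sq_le (sub_nonneg.mpr hx)).mpr (abs_le.mp hz)
    linarith

theorem arcsin_sub_arcsin_eq_arccos {a b : ℝ} (ha : 0 ≤ a) (hab : a ≤ b) (h : a ^ 2 + b ^ 2 = 1) :
    arcsin b - arcsin a = arccos (2 * a * b) := by
  have hcos_b : cos (arcsin b) = a := by
    rw [cos_arcsin, show 1 - b ^ 2 = a ^ 2 by linarith, sqrt_sq ha]
  have hcos_a : cos (arcsin a) = b := by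
    rw [cos_arcsin, show 1 - a ^ 2 = b ^ 2 by linarith, sqrt_sq (ha.trans hab)]
  have hb1 : b ≤ 1 := by nlinarith
  have hsin_b : sin (arcsin b) = b := sin_arcsin (by linarith) hb1
  have hsin_a : sin (arcsin a) = a := sin_arcsin (by linarith) (hab.trans hb1)
  have h0 : 0 ≤ arcsin b - arcsin a := sub_nonneg.mpr (arcsin_le_arcsin hab)
  have hπ : arcsin b - arcsin a ≤ π := by
    linarith [arcsin_le_pi_div_two b, arcsin_nonneg.mpr ha]
  rw [← arccos_cos h0 hπ, cos_sub, hcos_a, hcos_b, hsin_a, hsin_b]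
  ring_nf

noncomputable def sqrtSubSqPrimitive (c x : ℝ) : ℝ :=
  (x * √(c - x ^ 2) + c * arcsin (x / √c)) / 2

theorem hasDerivAt_sqrtSubSqPrimitive {c x : ℝ} (hx : x ^ 2 < c) :
    HasDerivAt (sqrtSubSqPrimitive c) (√(c - x ^ 2)) x := by
  have hc : 0 < c := by nlinarith [sq_nonneg x]
  have hpos : 0 < c - x ^ 2 := by linarith
  have hsc : 0 < √c := sqrt_pos.mpr hc
  have hu : x / √c ∈ Ioo (-1 : ℝ) 1 := by
    obtain ⟨h₁, h₂⟩ := Real.sq_lt.mp hx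
    exact ⟨by rwa [lt_div_iff₀ hsc, neg_one_mul], by rwa [div_lt_one hsc]⟩
  have hroot : √(1 - (x / √c) ^ 2) = √(c - x ^ 2) / √c := by
    rw [← sqrt_div hpos.le, div_pow, sq_sqrt hc.le, one_sub_div hc.ne']
  have hsqrt := ((hasDerivAt_pow 2 x).const_sub c).sqrt hpos.ne'
  have harcsin := (hasDerivAt_arcsin hu.1.ne' hu.2.ne).comp x ((hasDerivAt_id' x).div_const √c)
  refine ((((hasDerivAt_id' x).mul hsqrt).add (harcsin.const_mul c)).div_const 2).congr_deriv ?_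
  rw [hroot]
  field_simp
  rw [sq_sqrt hpos.le]
  ring

theorem continuous_sqrtSubSqPrimitive (c : ℝ) : Continuous (sqrtSubSqPrimitive c) := by
  unfold sqrtSubSqPrimitive; fun_prop

theorem integral_sqrt_sub_sq {a b c : ℝ} (ha : -√c ≤ a) (hab : a ≤ b) (hb : b ≤ √c) :
    ∫ x in a..b, √(c - x ^ 2) = sqrtSubSqPrimitive c b - sqrtSubSqPrimitive c a := by
  refine intervalIntegral.integral_eq_sub_of_hasDerivAt_of_le hab
    (continuous_sqrtSubSqPrimitive c).continuousOn (fun x hx => ?_)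
    ((by fun_prop : Continuous fun x => √(c - x ^ 2)).intervalIntegrable a b)
  exact hasDerivAt_sqrtSubSqPrimitive (Real.sq_lt.mpr ⟨ha.trans_lt hx.1, hx.2.trans_le hb⟩)

namespace Lens

variable {a b y x : ℝ}

theorem one_le_add_iff_mem_Icc {A B : ℝ} (hab : a ≤ b) (h1 : a + b = 1) (hy : a ^ 2 + b ^ 2 = y)
    (hA : 0 ≤ A) (hB : 0 ≤ B) (hA1 : A ≤ 1) (hB1 : B ≤ 1)
    (hA2 : A ^ 2 = y - x ^ 2) (hB2 : B ^ 2 = y - (x - 1) ^ 2) :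
    1 ≤ A + B ↔ x ∈ Icc a b := by
  have key : (1 - (A + B) ^ 2) * (1 - (A - B) ^ 2) = 8 * ((x - a) * (x - b)) := by
    obtain rfl : b = 1 - a := by linarith
    subst hy
    linear_combination (A ^ 2 - B ^ 2 + (x - 1) ^ 2 - x ^ 2 - 2) * hA2
      - (A ^ 2 - B ^ 2 + (x - 1) ^ 2 - x ^ 2 + 2) * hB2
  -- `(A - B)² ≤ 1` and `(A - B)² ≤ (A + B)²`, so the sign of `key` decides whether `(A + B)² ≥ 1`.
  have hQ : (A - B) ^ 2 ≤ 1 := by nlinarith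
  have hQP : (A - B) ^ 2 ≤ (A + B) ^ 2 := by nlinarith [mul_nonneg hA hB]
  constructor
  · intro h
    have hP : 1 ≤ (A + B) ^ 2 := one_le_pow₀ h
    have hprod := mul_nonpos_of_nonpos_of_nonneg (sub_nonpos.mpr hP) (sub_nonneg.mpr hQ)
    rw [key] at hprod
    constructor
    · by_contra! hx
      nlinarith [mul_pos (sub_pos.mpr hx) (sub_pos.mpr (hx.trans_le hab))]
    · by_contra! hx
      nlinarith [mul_pos (sub_pos.mpr hx) (sub_pos.mpr (hab.trans_lt hx))]
  · rintro ⟨hxa, hxb⟩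
    by_contra! h
    have hP : (A + B) ^ 2 < 1 := pow_lt_one₀ (add_nonneg hA hB) h two_ne_zero
    have hprod := mul_pos (sub_pos.mpr hP) (sub_pos.mpr (hQP.trans_lt hP))
    rw [key] at hprod
    linarith [mul_nonpos_of_nonneg_of_nonpos (sub_nonneg.mpr hxa) (sub_nonpos.mpr hxb)]

theorem sq_le_of_mem_Icc (ha : 0 ≤ a) (hy : a ^ 2 + b ^ 2 = y) (hx : x ∈ Icc a b) : x ^ 2 ≤ y := by
  nlinarith [pow_le_pow_left₀ (ha.trans hx.1) hx.2 2]

theorem sub_one_sq_le_of_mem_Icc (ha : 0 ≤ a) (h1 : a + b = 1) (hy : a ^ 2 + b ^ 2 = y)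
    (hx : x ∈ Icc a b) : (x - 1) ^ 2 ≤ y := by
  rw [← neg_sub, neg_sq]
  exact sq_le_of_mem_Icc ha hy ⟨by linarith [hx.2], by linarith [hx.1]⟩

theorem one_le_sqrt_add_sqrt_iff (ha : 0 ≤ a) (hab : a ≤ b) (h1 : a + b = 1)
    (hy : a ^ 2 + b ^ 2 = y) (hx0 : x ^ 2 ≤ y) (hx1 : (x - 1) ^ 2 ≤ y) :
    1 ≤ √(y - x ^ 2) + √(y - (x - 1) ^ 2) ↔ x ∈ Icc a b := by
  have hy1 : y ≤ 1 := by nlinarith [mul_nonneg ha (ha.trans hab)]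
  exact one_le_add_iff_mem_Icc hab h1 hy (sqrt_nonneg _) (sqrt_nonneg _)
    (sqrt_le_one.mpr (by nlinarith)) (sqrt_le_one.mpr (by nlinarith))
    (sq_sqrt (by linarith)) (sq_sqrt (by linarith))

theorem mem_iff (ha : 0 ≤ a) (hab : a ≤ b) (h1 : a + b = 1) (hy : a ^ 2 + b ^ 2 = y)
    {z : ℝ} : (x ^ 2 + (z - 1) ^ 2 ≤ y ∧ (x - 1) ^ 2 + z ^ 2 ≤ y) ↔
      x ∈ Icc a b ∧ z ∈ Icc (1 - √(y - x ^ 2)) √(y - (x - 1) ^ 2) := by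
  rw [sq_add_sq_le_iff, sq_add_sq_le_iff, abs_le, abs_le]
  constructor
  · rintro ⟨⟨hx0, hz0, -⟩, hx1, -, hz1⟩
    exact ⟨(one_le_sqrt_add_sqrt_iff ha hab h1 hy hx0 hx1).mp (by linarith), by linarith, hz1⟩
  · rintro ⟨hx, hz0, hz1⟩
    have hy1 : y ≤ 1 := by nlinarith [mul_nonneg ha (ha.trans hab)]
    have hA : √(y - x ^ 2) ≤ 1 := sqrt_le_one.mpr (by nlinarith)
    have hB : √(y - (x - 1) ^ 2) ≤ 1 := sqrt_le_one.mpr (by nlinarith)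
    exact ⟨⟨sq_le_of_mem_Icc ha hy hx, by linarith, by linarith [sqrt_nonneg (y - x ^ 2)]⟩,
      sub_one_sq_le_of_mem_Icc ha h1 hy hx, by linarith, hz1⟩

theorem lower_le_upper (ha : 0 ≤ a) (hab : a ≤ b) (h1 : a + b = 1) (hy : a ^ 2 + b ^ 2 = y)
    (hx : x ∈ Icc a b) : 1 - √(y - x ^ 2) ≤ √(y - (x - 1) ^ 2) := by
  have := (one_le_sqrt_add_sqrt_iff ha hab h1 hy (sq_le_of_mem_Icc ha hy hx)
    (sub_one_sq_le_of_mem_Icc ha h1 hy hx)).mpr hx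
  linarith

theorem integral_height (ha : 0 ≤ a) (hab : a ≤ b) (h1 : a + b = 1)
    (hy : a ^ 2 + b ^ 2 = y) :
    ∫ x in a..b, (√(y - (x - 1) ^ 2) - (1 - √(y - x ^ 2))) = y * arccos (1 / y - 1) - (b - a) := by
  have hy0 : 0 < y := by nlinarith
  have hsy : 0 < √y := sqrt_pos.mpr hy0
  have hb : b ≤ √y := (le_sqrt (ha.trans hab) hy0.le).mpr (by nlinarith)
  have hreflect : ∫ x in a..b, √(y - (x - 1) ^ 2) = ∫ x in a..b, √(y - x ^ 2) := by
    have h := intervalIntegral.integral_comp_sub_left (fun x => √(y - x ^ 2)) (a := a) (b := b) 1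
    rw [show 1 - b = a by linarith, show 1 - a = b by linarith] at h
    simp only [← neg_sub (1 : ℝ), neg_sq] at h ⊢
    exact h
  have hint : ∀ f : ℝ → ℝ, Continuous f → IntervalIntegrable f volume a b :=
    fun f hf => hf.intervalIntegrable a b
  rw [intervalIntegral.integral_sub (hint _ (by fun_prop)) (hint _ (by fun_prop)),
    intervalIntegral.integral_sub (hint _ (by fun_prop)) (hint _ (by fun_prop)),
    intervalIntegral.integral_const, hreflect,
    integral_sqrt_sub_sq (by linarith [sqrt_nonneg y]) hab hb]
  have h2ab : 2 * a * b = 1 - y := by linear_combination (a + b + 1) * h1 - hy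
  have harccos : arcsin (b / √y) - arcsin (a / √y) = arccos (1 / y - 1) := by
    rw [arcsin_sub_arcsin_eq_arccos (div_nonneg ha hsy.le) (div_le_div_of_nonneg_right hab hsy.le)]
    · congr 1
      field_simp
      rw [sq_sqrt hy0.le]
      linear_combination y * h2ab
    · rw [div_pow, div_pow, sq_sqrt hy0.le]
      field_simp
      linarith
  unfold sqrtSubSqPrimitive
  rw [show y - b ^ 2 = a ^ 2 by linarith, show y - a ^ 2 = b ^ 2 by linarith,
    sqrt_sq ha, sqrt_sq (ha.trans hab), ← harccos]
  simp only [smul_eq_mul, mul_one]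
  ring

end Lens

/-- The area of the intersection of the two disks of radius `√y`
(for `1/2 ≤ y ≤ 1`) centered at `(0,1)` and `(1,0)` equals
`y·arccos(1/y − 1) − √(2y − 1)`. -/
theorem lens_area (y : ℝ) (hy0 : 1/2 ≤ y) (hy : y ≤ 1) :
    volume ({p : ℝ × ℝ | p.1^2 + (p.2 - 1)^2 ≤ y} ∩
      {p : ℝ × ℝ | (p.1 - 1)^2 + p.2^2 ≤ y}) =
    ENNReal.ofReal (y * Real.arccos (1/y - 1) - Real.sqrt (2*y - 1)) := by
  set s := √(2 * y - 1)
  have hs1 : s ≤ 1 := sqrt_le_one.mpr (by linarith)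
  have hs2 : s ^ 2 = 2 * y - 1 := sq_sqrt (by linarith)
  obtain ⟨a, b, ha, hab, h1, hy_ab, hba⟩ :
      ∃ a b : ℝ, 0 ≤ a ∧ a ≤ b ∧ a + b = 1 ∧ a ^ 2 + b ^ 2 = y ∧ b - a = s :=
    ⟨(1 - s) / 2, (1 + s) / 2, by linarith, by linarith [sqrt_nonneg (2 * y - 1)], by ring,
      by linear_combination hs2 / 2, by ring⟩
  have hlens : {p : ℝ × ℝ | p.1 ^ 2 + (p.2 - 1) ^ 2 ≤ y} ∩ {p | (p.1 - 1) ^ 2 + p.2 ^ 2 ≤ y} =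
      {p | p.1 ∈ Icc a b ∧ p.2 ∈ Icc (1 - √(y - p.1 ^ 2)) √(y - (p.1 - 1) ^ 2)} :=
    ext fun _ => Lens.mem_iff ha hab h1 hy_ab
  rw [hlens, Measure.volume_eq_prod,
    volume_region_between_cc_eq_integral (by fun_prop) (by fun_prop) measurableSet_Icc
      (Continuous.integrableOn_Icc (by fun_prop)) fun _ => Lens.lower_le_upper ha hab h1 hy_ab,
    integral_Icc_eq_integral_Ioc, ← intervalIntegral.integral_of_le hab,
    Lens.integral_height ha hab h1 hy_ab, hba]
end

section
/- Let ω_n → ∞ be any function, and set x = (1/2)√(ω_n/n). In a random interval graph on n vertices, the probability that at least one of the n random intervals contains [x, 1−x] tends to 1 as n → ∞. Consequently, P(Δ(G) ≥ n − ω_n) → 1. -/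
/-!
An interval with left endpoint in `[0, x]` and right endpoint in `[1 - x, 1]` covers
`[x, 1 - x]`; this has probability `x²`, so all `n` intervals fail with probability at most
`(1 - x²)ⁿ ≤ exp (-n x²) = exp (-ω/4)`.

For the degree, run the same argument at the smaller scale `y = √(ω'/n) / 2` with
`ω' = min (√ω) n`: with high probability some interval `I` covers `[y, 1 - y]`, and then every
interval meeting `[y, 1 - y]` is a neighbour of `I`. An interval missing `[y, 1 - y]` lies in
`[0, y)` or `(1 - y, 1]`, which has probability at most `2y²`, so by Markov's inequality more
than `ω - 1` of them occur with probability at most `2ny²/(ω - 1) ≈ ω'/(2ω) → 0`.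
-/

open MeasureTheory Set Filter
open scoped Classical

/-- The uniform probability measure on the unit square. -/
noncomputable def unifSq : Measure (ℝ × ℝ) :=
  volume.restrict (Set.Icc (0:ℝ) 1 ×ˢ Set.Icc (0:ℝ) 1)

/-- The random interval associated to a pair of endpoints. -/
def rInt (q : ℝ × ℝ) : Set ℝ := Set.Icc (min q.1 q.2) (max q.1 q.2)

/-- The law of the `n` independent random intervals. -/
noncomputable def rigMeasure (n : ℕ) : Measure (Fin n → ℝ × ℝ) :=
  Measure.pi fun _ => unifSq

/-- The degree of vertex `i` in the random interval graph. -/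
noncomputable def rigDeg {n : ℕ} (ω : Fin n → ℝ × ℝ) (i : Fin n) : ℕ :=
  (Finset.univ.filter (fun j : Fin n => j ≠ i ∧
    (rInt (ω i) ∩ rInt (ω j)).Nonempty)).card

/-- The maximum degree of the random interval graph. -/
noncomputable def rigMaxDeg {n : ℕ} (ω : Fin n → ℝ × ℝ) : ℕ :=
  Finset.univ.sup (rigDeg ω)

open scoped ENNReal Topology

instance : IsProbabilityMeasure unifSq := by
  constructor
  rw [unifSq, Measure.restrict_apply_univ, Measure.volume_eq_prod, Measure.prod_prod,
    Real.volume_Icc]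
  norm_num

instance (n : ℕ) : IsProbabilityMeasure (rigMeasure n) := by
  unfold rigMeasure; infer_instance

lemma tendsto_toReal_measure_of_compl {ι : Type*} {l : Filter ι} {Ω : ι → Type*}
    [∀ k, MeasurableSpace (Ω k)] {μ : ∀ k, Measure (Ω k)} [∀ k, IsProbabilityMeasure (μ k)]
    {s : ∀ k, Set (Ω k)} (h : Tendsto (fun k => μ k (s k)ᶜ) l (𝓝 0)) :
    Tendsto (fun k => (μ k (s k)).toReal) l (𝓝 1) := by
  have hcompl : Tendsto (fun k => (μ k).real (s k)ᶜ) l (𝓝 0) :=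
    (ENNReal.tendsto_toReal ENNReal.zero_ne_top).comp h
  refine tendsto_of_tendsto_of_tendsto_of_le_of_le (by simpa using hcompl.const_sub 1)
    tendsto_const_nhds (fun k => ?_) (fun k => measureReal_le_one)
  have := measureReal_union_le (μ := μ k) (s k) (s k)ᶜ
  rw [union_compl_self, probReal_univ] at this
  simp only [measureReal_def] at this ⊢
  linarith

section CountIn

variable {ι α : Type*} [Fintype ι]

noncomputable def countIn (S : Set α) (ω : ι → α) : ℕ := (Finset.univ.filter fun j => ω j ∈ S).card

lemma countIn_eq_sum_indicator (S : Set α) (ω : ι → α) :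
    (countIn S ω : ℝ≥0∞) = ∑ j, S.indicator 1 (ω j) := by
  rw [countIn, Finset.card_filter, Nat.cast_sum]
  refine Finset.sum_congr rfl fun j _ => ?_
  by_cases hj : ω j ∈ S <;> simp [hj]

lemma mul_pi_le_countIn_le [MeasurableSpace α] (μ : Measure α) [IsProbabilityMeasure μ]
    {S : Set α} (hS : MeasurableSet S) (ε : ℝ≥0∞) :
    ε * Measure.pi (fun _ : ι => μ) {ω | ε ≤ countIn S ω} ≤ Fintype.card ι * μ S := by
  have hterm : ∀ j : ι, Measurable fun ω : ι → α => S.indicator (1 : α → ℝ≥0∞) (ω j) :=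
    fun j => (measurable_one.indicator hS).comp (measurable_pi_apply j)
  simp_rw [countIn_eq_sum_indicator]
  refine (mul_meas_ge_le_lintegral (Finset.measurable_sum _ fun j _ => hterm j) ε).trans_eq ?_
  have hcoord : ∀ j : ι,
      ∫⁻ ω : ι → α, S.indicator 1 (ω j) ∂Measure.pi (fun _ => μ) = μ S := fun j =>
    ((measurePreserving_eval (fun _ : ι => μ) j).lintegral_comp
      (measurable_one.indicator hS)).trans (lintegral_indicator_one hS)
  rw [lintegral_finsetSum _ fun j _ => hterm j, Finset.sum_congr rfl fun j _ => hcoord j]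
  simp

end CountIn

def coverEvent (n : ℕ) (x : ℝ) : Set (Fin n → ℝ × ℝ) := {ω | ∃ i, Icc x (1 - x) ⊆ rInt (ω i)}

lemma coverEvent_mono (n : ℕ) : Monotone (coverEvent n) :=
  fun _ _ hxx' _ ⟨i, hi⟩ => ⟨i, (Icc_subset_Icc hxx' (by linarith)).trans hi⟩

lemma unifSq_Icc_prod_Icc {x : ℝ} (h0 : 0 ≤ x) (h1 : x ≤ 1) :
    unifSq (Icc 0 x ×ˢ Icc (1 - x) 1) = ENNReal.ofReal (x ^ 2) := by
  rw [unifSq, Measure.restrict_apply (measurableSet_Icc.prod measurableSet_Icc),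
    inter_eq_self_of_subset_left
      (Set.prod_mono (Icc_subset_Icc le_rfl h1) (Icc_subset_Icc (by linarith) le_rfl)),
    Measure.volume_eq_prod, Measure.prod_prod, Real.volume_Icc, Real.volume_Icc,
    ← ENNReal.ofReal_mul (by linarith)]
  ring_nf

lemma rigMeasure_compl_coverEvent_le (n : ℕ) {x : ℝ} (h0 : 0 ≤ x) (h1 : x ≤ 1) :
    rigMeasure n (coverEvent n x)ᶜ ≤ ENNReal.ofReal (1 - x ^ 2) ^ n := by
  set S : Set (ℝ × ℝ) := Icc 0 x ×ˢ Icc (1 - x) 1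
  have hS_cover : ∀ q ∈ S, Icc x (1 - x) ⊆ rInt q := fun q hq =>
    Icc_subset_Icc ((min_le_left _ _).trans hq.1.2) (hq.2.1.trans (le_max_right _ _))
  have hsub : (coverEvent n x)ᶜ ⊆ univ.pi fun _ => Sᶜ :=
    fun ω hω i _ hi => hω ⟨i, hS_cover _ hi⟩
  have hSc : unifSq Sᶜ = ENNReal.ofReal (1 - x ^ 2) := by
    rw [measure_compl (measurableSet_Icc.prod measurableSet_Icc) (measure_ne_top _ _),
      measure_univ, unifSq_Icc_prod_Icc h0 h1, ENNReal.ofReal_sub 1 (by positivity),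
      ENNReal.ofReal_one]
  calc rigMeasure n (coverEvent n x)ᶜ ≤ rigMeasure n (univ.pi fun _ => Sᶜ) := measure_mono hsub
    _ = ENNReal.ofReal (1 - x ^ 2) ^ n := by simp [rigMeasure, Measure.pi_pi, hSc]

lemma rigMeasure_compl_coverEvent_le_exp (n : ℕ) {x : ℝ} (h0 : 0 ≤ x) :
    rigMeasure n (coverEvent n x)ᶜ ≤ ENNReal.ofReal (Real.exp (-(n * min x (1 / 2) ^ 2))) := by
  set m := min x (1 / 2)
  have hm0 : 0 ≤ m := le_min h0 (by norm_num)
  have hm1 : m ≤ 1 / 2 := min_le_right _ _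
  calc rigMeasure n (coverEvent n x)ᶜ ≤ rigMeasure n (coverEvent n m)ᶜ :=
        measure_mono (compl_subset_compl.2 (coverEvent_mono n (min_le_left _ _)))
    _ ≤ ENNReal.ofReal (1 - m ^ 2) ^ n := rigMeasure_compl_coverEvent_le n hm0 (by linarith)
    _ = ENNReal.ofReal ((1 - m ^ 2) ^ n) := (ENNReal.ofReal_pow (by nlinarith) n).symm
    _ ≤ ENNReal.ofReal (Real.exp (-m ^ 2) ^ n) := ENNReal.ofReal_le_ofReal
        (pow_le_pow_left₀ (by nlinarith) (Real.one_sub_le_exp_neg _) n)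
    _ = ENNReal.ofReal (Real.exp (-(n * m ^ 2))) := by rw [← Real.exp_nat_mul]; ring_nf

lemma mul_sq_sqrt_div_two {n : ℕ} {v : ℝ} (hn : 0 < n) (hv : 0 ≤ v) :
    n * (√(v / n) / 2) ^ 2 = v / 4 := by
  rw [div_pow, Real.sq_sqrt (by positivity)]
  field_simp
  norm_num

lemma tendsto_rigMeasure_compl_coverEvent {v : ℕ → ℝ} (hv : Tendsto v atTop atTop) :
    Tendsto (fun n => rigMeasure n (coverEvent n (√(v n / n) / 2))ᶜ) atTop (𝓝 0) := by
  have hrate : Tendsto (fun n : ℕ => min (v n) n / 4) atTop atTop :=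
    (tendsto_inf_atTop _ hv tendsto_natCast_atTop_atTop).atTop_div_const (by norm_num)
  have hbound : ∀ᶠ n : ℕ in atTop, rigMeasure n (coverEvent n (√(v n / n) / 2))ᶜ ≤
      ENNReal.ofReal (Real.exp (-(min (v n) n / 4))) := by
    filter_upwards [hv.eventually_ge_atTop 0, eventually_gt_atTop 0] with n hv0 hn
    refine (rigMeasure_compl_coverEvent_le_exp n (by positivity)).trans
      (ENNReal.ofReal_le_ofReal (Real.exp_le_exp.2 (neg_le_neg ?_)))
    rcases le_total (√(v n / n) / 2) (1 / 2) with hx | hx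
    · rw [min_eq_left hx, mul_sq_sqrt_div_two hn hv0]
      linarith [min_le_left (v n) n]
    · rw [min_eq_right hx]
      linarith [min_le_right (v n) n]
  have hlim := ENNReal.tendsto_ofReal (Real.tendsto_exp_neg_atTop_nhds_zero.comp hrate)
  rw [ENNReal.ofReal_zero] at hlim
  exact tendsto_of_tendsto_of_tendsto_of_le_of_le' tendsto_const_nhds hlim
    (Eventually.of_forall fun _ => zero_le) hbound

def missesMiddle (y : ℝ) : Set (ℝ × ℝ) := {q | max q.1 q.2 < y ∨ 1 - y < min q.1 q.2}

lemma measurableSet_missesMiddle (y : ℝ) : MeasurableSet (missesMiddle y) :=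
  ((measurable_fst.max measurable_snd) measurableSet_Iio).union
    ((measurable_fst.min measurable_snd) measurableSet_Ioi)

lemma unifSq_missesMiddle_le {y : ℝ} (hy : 0 ≤ y) :
    unifSq (missesMiddle y) ≤ ENNReal.ofReal (2 * y ^ 2) := by
  have hsub : missesMiddle y ∩ Icc 0 1 ×ˢ Icc 0 1 ⊆
      Icc 0 y ×ˢ Icc 0 y ∪ Icc (1 - y) 1 ×ˢ Icc (1 - y) 1 := by
    rintro ⟨a, b⟩ ⟨hlow | hhigh, ⟨ha0, ha1⟩, hb0, hb1⟩
    · exact Or.inl ⟨⟨ha0, ((le_max_left a b).trans_lt hlow).le⟩,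
        ⟨hb0, ((le_max_right a b).trans_lt hlow).le⟩⟩
    · exact Or.inr ⟨⟨(hhigh.trans_le (min_le_left a b)).le, ha1⟩,
        ⟨(hhigh.trans_le (min_le_right a b)).le, hb1⟩⟩
  calc unifSq (missesMiddle y)
      ≤ volume (Icc 0 y ×ˢ Icc 0 y ∪ Icc (1 - y) 1 ×ˢ Icc (1 - y) (1 : ℝ)) := by
        rw [unifSq, Measure.restrict_apply (measurableSet_missesMiddle y)]
        exact measure_mono hsub
    _ ≤ volume (Icc 0 y ×ˢ Icc 0 y) + volume (Icc (1 - y) 1 ×ˢ Icc (1 - y) (1 : ℝ)) :=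
        measure_union_le _ _
    _ = ENNReal.ofReal (2 * y ^ 2) := by
        rw [Measure.volume_eq_prod, Measure.prod_prod, Measure.prod_prod, Real.volume_Icc,
          Real.volume_Icc, sub_zero, sub_sub_cancel, ← ENNReal.ofReal_mul hy,
          ← ENNReal.ofReal_add (by positivity) (by positivity)]
        ring_nf

lemma Icc_inter_rInt_nonempty {y : ℝ} (hy : y ≤ 1 / 2) {q : ℝ × ℝ} (hq : q ∉ missesMiddle y) :
    (Icc y (1 - y) ∩ rInt q).Nonempty := by
  simp only [missesMiddle, mem_ofPred_eq, not_or, not_lt] at hq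
  exact ⟨max y (min q.1 q.2), ⟨le_max_left _ _, max_le (by linarith) hq.2⟩,
    le_max_right _ _, max_le hq.1 min_le_max⟩

lemma card_le_rigMaxDeg_add_countIn {n : ℕ} {ω : Fin n → ℝ × ℝ} {y : ℝ} (hy : y ≤ 1 / 2)
    (hω : ω ∈ coverEvent n y) : n ≤ rigMaxDeg ω + countIn (missesMiddle y) ω + 1 := by
  obtain ⟨i, hi⟩ := hω
  set P : Fin n → Prop := fun j => j ≠ i ∧ (rInt (ω i) ∩ rInt (ω j)).Nonempty
  have hnonadj : Finset.univ.filter (fun j => ¬ P j) ⊆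
      insert i (Finset.univ.filter fun j => ω j ∈ missesMiddle y) := by
    intro j hj
    rw [Finset.mem_insert, Finset.mem_filter]
    by_contra! hji
    obtain ⟨p, hp_mid, hp⟩ := Icc_inter_rInt_nonempty hy (hji.2 (Finset.mem_univ j))
    exact (Finset.mem_filter.1 hj).2 ⟨hji.1, p, hi hp_mid, hp⟩
  have hsplit := Finset.card_filter_add_card_filter_not (s := Finset.univ) P
  have hdeg : (Finset.univ.filter P).card ≤ rigMaxDeg ω :=
    Finset.le_sup (f := rigDeg ω) (Finset.mem_univ i)
  have hcard := (Finset.card_le_card hnonadj).trans (Finset.card_insert_le _ _)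
  rw [Finset.card_univ, Fintype.card_fin] at hsplit
  unfold countIn
  omega

lemma rigMeasure_le_countIn_missesMiddle (n : ℕ) {y ε : ℝ} (hy : 0 ≤ y) (hε : 0 < ε) :
    rigMeasure n {ω | ε ≤ (countIn (missesMiddle y) ω : ℝ)} ≤
      ENNReal.ofReal (2 * n * y ^ 2 / ε) := by
  have hmarkov := mul_pi_le_countIn_le (ι := Fin n) unifSq (measurableSet_missesMiddle y)
    (ENNReal.ofReal ε)
  have hsub : {ω : Fin n → ℝ × ℝ | ε ≤ (countIn (missesMiddle y) ω : ℝ)} ⊆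
      {ω | ENNReal.ofReal ε ≤ countIn (missesMiddle y) ω} := fun ω hω => by
    simpa using ENNReal.ofReal_le_ofReal hω
  calc rigMeasure n {ω | ε ≤ (countIn (missesMiddle y) ω : ℝ)}
      ≤ n * unifSq (missesMiddle y) / ENNReal.ofReal ε := by
        rw [ENNReal.le_div_iff_mul_le (.inl (by simpa using hε)) (.inl ENNReal.ofReal_ne_top),
          mul_comm]
        simpa [rigMeasure] using (mul_le_mul_right (measure_mono hsub) _).trans hmarkov
    _ ≤ n * ENNReal.ofReal (2 * y ^ 2) / ENNReal.ofReal ε := by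
        gcongr
        exact unifSq_missesMiddle_le hy
    _ = ENNReal.ofReal (2 * n * y ^ 2 / ε) := by
        rw [ENNReal.ofReal_div_of_pos hε, show 2 * (n : ℝ) * y ^ 2 = n * (2 * y ^ 2) by ring,
          ENNReal.ofReal_mul n.cast_nonneg, ENNReal.ofReal_natCast]

lemma tendsto_rigMeasure_le_countIn_missesMiddle {w y : ℕ → ℝ} (hw : Tendsto w atTop atTop)
    (hy0 : ∀ n, 0 ≤ y n) (hy : ∀ᶠ n in atTop, n * y n ^ 2 ≤ √(w n) / 4) :
    Tendsto (fun n => rigMeasure n {ω | w n - 1 ≤ (countIn (missesMiddle (y n)) ω : ℝ)})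
      atTop (𝓝 0) := by
  have hbound : ∀ᶠ n in atTop, rigMeasure n {ω | w n - 1 ≤ (countIn (missesMiddle (y n)) ω : ℝ)}
      ≤ ENNReal.ofReal (√(w n))⁻¹ := by
    filter_upwards [hy, hw.eventually_ge_atTop 2] with n hny hw2
    refine (rigMeasure_le_countIn_missesMiddle n (hy0 n) (by linarith)).trans
      (ENNReal.ofReal_le_ofReal ?_)
    have hsqrt : √(w n) ^ 2 = w n := Real.sq_sqrt (by linarith)
    have hsqrt_pos : 0 < √(w n) := Real.sqrt_pos.2 (by linarith)
    rw [div_le_iff₀ (by linarith), ← div_eq_inv_mul, le_div_iff₀ hsqrt_pos]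
    nlinarith
  have hlim := ENNReal.tendsto_ofReal
    (tendsto_inv_atTop_zero.comp (Real.tendsto_sqrt_atTop.comp hw))
  rw [ENNReal.ofReal_zero] at hlim
  exact tendsto_of_tendsto_of_tendsto_of_le_of_le' tendsto_const_nhds hlim
    (Eventually.of_forall fun _ => zero_le) hbound

lemma compl_setOf_le_rigMaxDeg_subset (n : ℕ) (W : ℝ) {y : ℝ} (hy : y ≤ 1 / 2) :
    {ω : Fin n → ℝ × ℝ | n - W ≤ rigMaxDeg ω}ᶜ ⊆
      (coverEvent n y)ᶜ ∪ {ω | W - 1 ≤ (countIn (missesMiddle y) ω : ℝ)} := by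
  intro ω hω
  by_contra hgood
  simp only [mem_union, mem_compl_iff, not_or, not_not, mem_ofPred_eq, not_le] at hgood hω
  have hcard : (n : ℝ) ≤ rigMaxDeg ω + countIn (missesMiddle y) ω + 1 := by
    exact_mod_cast card_le_rigMaxDeg_add_countIn hy hgood.1
  linarith

lemma tendsto_rigMeasure_compl_le_rigMaxDeg {w : ℕ → ℝ} (hw : Tendsto w atTop atTop) :
    Tendsto (fun n => rigMeasure n {ω | n - w n ≤ rigMaxDeg ω}ᶜ) atTop (𝓝 0) := by
  set v : ℕ → ℝ := fun n => min √(w n) n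
  set y : ℕ → ℝ := fun n => √(v n / n) / 2
  have hv : Tendsto v atTop atTop :=
    tendsto_inf_atTop _ (Real.tendsto_sqrt_atTop.comp hw) tendsto_natCast_atTop_atTop
  have hy_half : ∀ n, y n ≤ 1 / 2 := fun n => by
    have : √(v n / n) ≤ 1 :=
      Real.sqrt_le_one.2 (div_le_one_of_le₀ (min_le_right _ _) n.cast_nonneg)
    simp only [y]
    linarith
  have hny : ∀ᶠ n : ℕ in atTop, n * y n ^ 2 ≤ √(w n) / 4 := by
    filter_upwards [eventually_gt_atTop 0] with n hn
    rw [mul_sq_sqrt_div_two hn (le_min (Real.sqrt_nonneg _) n.cast_nonneg)]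
    linarith [min_le_left √(w n) n]
  have hlim := (tendsto_rigMeasure_compl_coverEvent hv).add
    (tendsto_rigMeasure_le_countIn_missesMiddle hw (fun n => by positivity) hny)
  rw [add_zero] at hlim
  exact tendsto_of_tendsto_of_tendsto_of_le_of_le tendsto_const_nhds hlim (fun _ => zero_le)
    fun n => (measure_mono (compl_setOf_le_rigMaxDeg_subset n (w n) (hy_half n))).trans
      (measure_union_le _ _)

/-- Let `ω_n → ∞` and `x = (1/2)√(ω_n/n)`. With probability tending to 1, some
random interval contains `[x, 1−x]`; consequently `P(Δ(G) ≥ n − ω_n) → 1`. -/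
theorem max_degree_near_full (w : ℕ → ℝ) (hw : Tendsto w atTop atTop) :
    Tendsto (fun n : ℕ =>
        ((rigMeasure n) {ω | ∃ i : Fin n,
          Set.Icc (Real.sqrt (w n / n) / 2) (1 - Real.sqrt (w n / n) / 2)
            ⊆ rInt (ω i)}).toReal)
      atTop (nhds 1) ∧
    Tendsto (fun n : ℕ =>
        ((rigMeasure n) {ω | (n : ℝ) - w n ≤ (rigMaxDeg ω : ℝ)}).toReal)
      atTop (nhds 1) :=
  ⟨tendsto_toReal_measure_of_compl (tendsto_rigMeasure_compl_coverEvent hw),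
    tendsto_toReal_measure_of_compl (tendsto_rigMeasure_compl_le_rigMaxDeg hw)⟩
end
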